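/- arXiv:2507.18134 — 8 statements merged into one kernel-verified Lean document; each statement's English description precedes it below -/
import Mathlib

section
/- Let L be a right Leibniz algebra and let Bider(L) be the set of biderivations of L. Then Bider(L) is closed under the bracket [(d,D),(d',D')] = (d∘d' − d'∘d, D∘d' − d'∘D), and this bracket makes Bider(L) a (right) Leibniz algebra. -/
variable {F : Type*} [Field F] {L : Type*} [AddCommGroup L] [Module F L]

/-- `d` is a derivation with respect to the bracket `br`. -/
def IsDer (br : L →ₗ[F] L →ₗ[F] L) (d : L →ₗ[F] L) : Prop :=
  ∀ x y : L, d (br x y) = br (d x) y + br x (d y)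

/-- `D` is an anti-derivation with respect to the bracket `br`. -/
def IsAntiDer (br : L →ₗ[F] L →ₗ[F] L) (D : L →ₗ[F] L) : Prop :=
  ∀ x y : L, D (br x y) = br (D x) y - br (D y) x

/-- `(d, D)` is a biderivation with respect to the bracket `br`. -/
def IsBider (br : L →ₗ[F] L →ₗ[F] L) (p : (L →ₗ[F] L) × (L →ₗ[F] L)) : Prop :=
  IsDer br p.1 ∧ IsAntiDer br p.2 ∧ ∀ x y : L, br x (p.1 y) = br x (p.2 y)

/-- The bracket on pairs: `[(d,D),(d',D')] = (d∘d' − d'∘d, D∘d' − d'∘D)`. -/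
def biderBracket (p q : (L →ₗ[F] L) × (L →ₗ[F] L)) : (L →ₗ[F] L) × (L →ₗ[F] L) :=
  (p.1 ∘ₗ q.1 - q.1 ∘ₗ p.1, p.2 ∘ₗ q.1 - q.1 ∘ₗ p.2)

/-!
Both components of `[(d,D),(d',D')]` are commutator-type expressions in the associative algebra
`End L`, so expanding them shows directly that `d ∘ d' - d' ∘ d` is a derivation and
`D ∘ d' - d' ∘ D` an anti-derivation. The compatibility `[x, d y] = [x, D y]` survives applying a
derivation `d'` to `y`, because `d'` moves across the bracket. The Leibniz identity is a formal
identity between composites in `End L`.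
-/

variable {br : L →ₗ[F] L →ₗ[F] L}

theorem IsDer.comp_sub_comp {d d' : L →ₗ[F] L} (hd : IsDer br d) (hd' : IsDer br d') :
    IsDer br (d ∘ₗ d' - d' ∘ₗ d) := by
  unfold IsDer at hd hd'
  intro x y
  simp only [LinearMap.sub_apply, LinearMap.comp_apply, hd, hd', map_add, map_sub]
  abel

theorem IsAntiDer.comp_sub_comp_of_isDer {D d' : L →ₗ[F] L} (hD : IsAntiDer br D)
    (hd' : IsDer br d') : IsAntiDer br (D ∘ₗ d' - d' ∘ₗ D) := by
  unfold IsAntiDer at hD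
  unfold IsDer at hd'
  intro x y
  simp only [LinearMap.sub_apply, LinearMap.comp_apply, hD, hd', map_add, map_sub]
  abel

theorem IsDer.bracket_apply_congr {d' : L →ₗ[F] L} (hd' : IsDer br d') {u v : L}
    (h : ∀ x, br x u = br x v) (x : L) : br x (d' u) = br x (d' v) := by
  have key : br (d' x) u + br x (d' u) = br (d' x) v + br x (d' v) := by
    rw [← hd', ← hd', h]
  rwa [h, add_right_inj] at key

theorem IsBider.biderBracket {p q : (L →ₗ[F] L) × (L →ₗ[F] L)} (hp : IsBider br p)
    (hq : IsBider br q) : IsBider br (biderBracket p q) := by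
  obtain ⟨hd, hD, hc⟩ := hp
  obtain ⟨hd', -, -⟩ := hq
  refine ⟨hd.comp_sub_comp hd', hD.comp_sub_comp_of_isDer hd', fun x y => ?_⟩
  have hcompat : br x (q.1 (p.1 y)) = br x (q.1 (p.2 y)) := hd'.bracket_apply_congr (hc · y) x
  simp only [_root_.biderBracket, LinearMap.sub_apply, LinearMap.comp_apply, map_sub,
    hc x (q.1 y), hcompat]

theorem biderBracket_leibniz (p q r : (L →ₗ[F] L) × (L →ₗ[F] L)) :
    biderBracket (biderBracket p q) r =
      biderBracket (biderBracket p r) q + biderBracket p (biderBracket q r) := by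
  ext x
  · simp only [biderBracket, Prod.fst_add, LinearMap.add_apply, LinearMap.sub_apply,
      LinearMap.comp_apply, map_sub]
    abel
  · simp only [biderBracket, Prod.snd_add, LinearMap.add_apply, LinearMap.sub_apply,
      LinearMap.comp_apply, map_sub]
    abel

theorem bider_is_leibniz_algebra_general
    (br : L →ₗ[F] L →ₗ[F] L) :
    (∀ p q : (L →ₗ[F] L) × (L →ₗ[F] L), IsBider br p → IsBider br q →
      IsBider br (biderBracket p q)) ∧
    (∀ p q r : (L →ₗ[F] L) × (L →ₗ[F] L), IsBider br p → IsBider br q → IsBider br r →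
      biderBracket (biderBracket p q) r =
        biderBracket (biderBracket p r) q + biderBracket p (biderBracket q r)) :=
  ⟨fun _ _ hp hq => hp.biderBracket hq, fun p q r _ _ _ => biderBracket_leibniz p q r⟩

/-- Bider(L) is closed under the bracket, and this bracket satisfies
the (right) Leibniz identity on biderivations. -/
theorem bider_is_leibniz_algebra
    (br : L →ₗ[F] L →ₗ[F] L)
    (hleib : ∀ x y z : L, br (br x y) z = br (br x z) y + br x (br y z)) :
    (∀ p q : (L →ₗ[F] L) × (L →ₗ[F] L), IsBider br p → IsBider br q →
      IsBider br (biderBracket p q)) ∧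
    (∀ p q r : (L →ₗ[F] L) × (L →ₗ[F] L), IsBider br p → IsBider br q → IsBider br r →
      biderBracket (biderBracket p q) r =
        biderBracket (biderBracket p r) q + biderBracket p (biderBracket q r)) :=
  bider_is_leibniz_algebra_general br
end

section
/- Let L be a right Leibniz algebra. The map x ↦ (−ad_x, Ad_x), where ad_x(y) = [y,x] and Ad_x(y) = [x,y], is a homomorphism of Leibniz algebras from L to Bider(L), where Bider(L) carries the bracket [(d,D),(d',D')] = (d∘d' − d'∘d, D∘d' − d'∘D). -/
variable {F : Type*} [Field F] {L : Type*} [AddCommGroup L] [Module F L]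

/-- The map `x ↦ (−ad_x, Ad_x)`. -/
def innerBider (br : L →ₗ[F] L →ₗ[F] L) (x : L) : (L →ₗ[F] L) × (L →ₗ[F] L) :=
  (-(br.flip x), br x)

section RightLeibniz

variable (br : L →ₗ[F] L →ₗ[F] L)

theorem innerBider_add (x y : L) :
    innerBider br (x + y) = innerBider br x + innerBider br y := by
  simp only [innerBider, map_add, Prod.mk_add_mk, neg_add]

theorem innerBider_smul (c : F) (x : L) : innerBider br (c • x) = c • innerBider br x := by
  simp only [innerBider, map_smul, Prod.smul_mk, smul_neg]

variable {br} (hleib : ∀ x y z : L, br (br x y) z = br (br x z) y + br x (br y z))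
include hleib

/-- Applying the Leibniz identity to `[[a,y],z]` and to `[[a,z],y]` and adding shows that
`[a,[y,z]] + [a,[z,y]] = 0`. -/
theorem br_br_swap (a y z : L) : br a (br y z) = -br a (br z y) := by
  refine eq_neg_of_add_eq_zero_right ?_
  have h := hleib a y z
  rw [hleib a z y, add_assoc, left_eq_add] at h
  exact h

theorem isDer_neg_flip (x : L) : IsDer br (-br.flip x) := by
  intro a b
  simp only [LinearMap.neg_apply, LinearMap.flip_apply, map_neg, hleib a b x]
  abel

theorem isAntiDer_br (x : L) : IsAntiDer br (br x) := by
  intro a b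
  rw [hleib x a b]
  abel

theorem isBider_innerBider (x : L) : IsBider br (innerBider br x) := by
  refine ⟨isDer_neg_flip hleib x, isAntiDer_br hleib x, fun a b => ?_⟩
  simp only [innerBider, LinearMap.neg_apply, LinearMap.flip_apply, map_neg,
    br_br_swap hleib a b x, neg_neg]

theorem innerBider_br (x y : L) :
    innerBider br (br x y) = biderBracket (innerBider br x) (innerBider br y) := by
  simp only [innerBider, biderBracket, Prod.mk.injEq]
  constructor <;> ext a <;>
    simp only [LinearMap.sub_apply, LinearMap.comp_apply, LinearMap.neg_apply,
      LinearMap.flip_apply, map_neg, neg_neg]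
  · rw [hleib a y x, br_br_swap hleib a x y]
    abel
  · rw [hleib x a y]
    abel

end RightLeibniz

/-- `x ↦ (−ad_x, Ad_x)` is a Leibniz algebra homomorphism
`L → Bider(L)`. -/
theorem inner_bider_homomorphism
    (br : L →ₗ[F] L →ₗ[F] L)
    (hleib : ∀ x y z : L, br (br x y) z = br (br x z) y + br x (br y z)) :
    (∀ x : L, IsBider br (innerBider br x)) ∧
    (∀ x y : L, innerBider br (x + y) = innerBider br x + innerBider br y) ∧
    (∀ (c : F) (x : L), innerBider br (c • x) = c • innerBider br x) ∧
    (∀ x y : L, innerBider br (br x y) =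
      biderBracket (innerBider br x) (innerBider br y)) :=
  ⟨isBider_innerBider hleib, innerBider_add br, innerBider_smul br, innerBider_br hleib⟩
end

section
/- Let L be a right Leibniz algebra, d a derivation of L and D an anti-derivation of L. Then the commutator D∘d − d∘D is again an anti-derivation of L. (Thus the space of anti-derivations is a module over the Lie algebra Der(L).) -/
/- Expanding both composites by the (anti-)derivation rules, the mixed terms `[D x, d y]` and
`[D y, d x]` occur in `D (d [x,y])` and in `d (D [x,y])` alike and cancel. -/

theorem commutator_antiderivation_general
    {F : Type*} [Field F] {L : Type*} [AddCommGroup L] [Module F L]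
    (br : L →ₗ[F] L →ₗ[F] L)
    (d D : L →ₗ[F] L)
    (hd : ∀ x y : L, d (br x y) = br (d x) y + br x (d y))
    (hD : ∀ x y : L, D (br x y) = br (D x) y - br (D y) x) :
    ∀ x y : L, (D ∘ₗ d - d ∘ₗ D) (br x y) =
      br ((D ∘ₗ d - d ∘ₗ D) x) y - br ((D ∘ₗ d - d ∘ₗ D) y) x := by
  intro x y
  have hDd : D (d (br x y)) =
      br (D (d x)) y - br (D y) (d x) + (br (D x) (d y) - br (D (d y)) x) := by
    rw [hd, map_add, hD, hD]
  have hdD : d (D (br x y)) =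
      br (d (D x)) y + br (D x) (d y) - (br (d (D y)) x + br (D y) (d x)) := by
    rw [hD, map_sub, hd, hd]
  simp only [LinearMap.sub_apply, LinearMap.comp_apply, hDd, hdD, LinearMap.map_sub₂]
  abel

/-- if `d` is a derivation and `D` an anti-derivation, then
`D∘d − d∘D` is an anti-derivation. -/
theorem commutator_antiderivation
    {F : Type*} [Field F] {L : Type*} [AddCommGroup L] [Module F L]
    (br : L →ₗ[F] L →ₗ[F] L)
    (hleib : ∀ x y z : L, br (br x y) z = br (br x z) y + br x (br y z))
    (d D : L →ₗ[F] L)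
    (hd : ∀ x y : L, d (br x y) = br (d x) y + br x (d y))
    (hD : ∀ x y : L, D (br x y) = br (D x) y - br (D y) x) :
    ∀ x y : L, (D ∘ₗ d - d ∘ₗ D) (br x y) =
      br ((D ∘ₗ d - d ∘ₗ D) x) y - br ((D ∘ₗ d - d ∘ₗ D) y) x :=
  commutator_antiderivation_general br d D hd hD
end

section
/- Let NF_n be the n-dimensional null-filiform Leibniz algebra with basis e_1,…,e_n and multiplication [e_i,e_1] = e_{i+1} for 1 ≤ i ≤ n−1 (all other basis products zero). A linear map D : NF_n → NF_n is an anti-derivation if and only if D(e_i) = 0 for all 2 ≤ i ≤ n (with D(e_1) arbitrary). -/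
/-- The bracket of the null-filiform Leibniz algebra `NF_n`:
`[e_i, e_1] = e_{i+1}` (here `e_i` is `Pi.single (i-1) 1`). -/
def NFbr (n : ℕ) (x y : Fin n → ℂ) : Fin n → ℂ := fun i =>
  if _ : 1 ≤ (i : ℕ) then
    y ⟨0, Nat.lt_of_le_of_lt (Nat.zero_le _) i.isLt⟩ *
      x ⟨(i : ℕ) - 1, Nat.lt_of_le_of_lt (Nat.sub_le _ _) i.isLt⟩
  else 0

/-! A bracket `[x, y] = y₁ • (x shifted up by one)` only sees the first coordinate
of `y`, so `D e_{k+1} = D [e_k, e_1] = [D e_k, e_1] - [D e_1, e_k]` vanishes by induction on `k`.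
Conversely, if `D` kills `e_2, …, e_n` then `D x = x₁ • D e_1`; the bracket has no
`e_1`-component, so `D [x, y] = 0`, while `[D x, y] = x₁ y₁ • [D e_1, e_1] = [D y, x]`. -/

theorem LinearMap.apply_eq_smul_of_map_single_eq_zero {R M ι : Type*} [CommSemiring R]
    [AddCommMonoid M] [Module R M] [Fintype ι] [DecidableEq ι] (D : (ι → R) →ₗ[R] M) (i₀ : ι)
    (h : ∀ i ≠ i₀, D (Pi.single i 1) = 0) (x : ι → R) : D x = x i₀ • D (Pi.single i₀ 1) := by
  have hD : D = (LinearMap.proj i₀).smulRight (D (Pi.single i₀ 1)) := by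
    ext i
    by_cases hi : i = i₀
    · subst hi
      simp
    · simp [h i hi, hi]
  exact LinearMap.congr_fun hD x

section NFbr

variable {n : ℕ}

theorem NFbr_apply_mk_zero (hn : 0 < n) (x y : Fin n → ℂ) : NFbr n x y ⟨0, hn⟩ = 0 :=
  dif_neg (Nat.not_succ_le_zero 0)

theorem NFbr_zero_left (y : Fin n → ℂ) : NFbr n 0 y = 0 := by
  funext i
  simp [NFbr]

theorem NFbr_single_right_of_pos (x : Fin n → ℂ) {j : Fin n} (hj : 1 ≤ (j : ℕ)) (c : ℂ) :
    NFbr n x (Pi.single j c) = 0 := by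
  funext i
  have hj0 : (⟨0, Nat.lt_of_le_of_lt (Nat.zero_le _) i.isLt⟩ : Fin n) ≠ j := by
    rintro rfl
    exact absurd hj (by simp)
  simp [NFbr, hj0]

theorem NFbr_single_single {k : ℕ} (hk : k + 1 < n) :
    NFbr n (Pi.single ⟨k, Nat.lt_of_succ_lt hk⟩ 1) (Pi.single ⟨0, Nat.zero_lt_of_lt hk⟩ 1) =
      Pi.single ⟨k + 1, hk⟩ 1 := by
  funext i
  simp only [NFbr, Pi.single_apply]
  split_ifs <;> simp_all [Fin.ext_iff]; omega

theorem NFbr_smul_left_comm (hn : 0 < n) (x y d : Fin n → ℂ) :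
    NFbr n (x ⟨0, hn⟩ • d) y = NFbr n (y ⟨0, hn⟩ • d) x := by
  funext i
  simp only [NFbr, Pi.smul_apply, smul_eq_mul]
  split_ifs
  · ring
  · rfl

end NFbr

theorem map_single_succ_eq_zero_of_antiderivation {n : ℕ} {D : (Fin n → ℂ) →ₗ[ℂ] (Fin n → ℂ)}
    (hD : ∀ x y : Fin n → ℂ, D (NFbr n x y) = NFbr n (D x) y - NFbr n (D y) x)
    (k : ℕ) (hk : k + 1 < n) : D (Pi.single ⟨k + 1, hk⟩ 1) = 0 := by
  induction k with
  | zero => rw [← NFbr_single_single hk, hD, sub_self]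
  | succ k ih =>
    rw [← NFbr_single_single hk, hD, ih (Nat.lt_of_succ_lt hk), NFbr_zero_left,
      NFbr_single_right_of_pos _ (Nat.le_add_left 1 k), sub_zero]

/-- a linear map `D` on `NF_n` is an anti-derivation iff it kills
`e_2, …, e_n` (its value on `e_1` being arbitrary). -/
theorem NF_antiderivation_characterization (n : ℕ)
    (D : (Fin n → ℂ) →ₗ[ℂ] (Fin n → ℂ)) :
    (∀ x y : Fin n → ℂ, D (NFbr n x y) = NFbr n (D x) y - NFbr n (D y) x) ↔
    (∀ i : Fin n, 1 ≤ (i : ℕ) → D (Pi.single i 1) = 0) := by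
  constructor
  · rintro hD ⟨i, hi⟩ hi1
    obtain ⟨k, rfl⟩ := Nat.exists_eq_add_of_le' hi1
    exact map_single_succ_eq_zero_of_antiderivation hD k hi
  · intro hD x y
    obtain rfl | hn := n.eq_zero_or_pos
    · exact Subsingleton.elim _ _
    have hD_apply := D.apply_eq_smul_of_map_single_eq_zero ⟨0, hn⟩ fun i hi =>
      hD i (Nat.one_le_iff_ne_zero.mpr fun h => hi (Fin.ext h))
    rw [hD_apply, hD_apply x, hD_apply y, NFbr_apply_mk_zero, zero_smul,
      NFbr_smul_left_comm hn, sub_self]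
end

section
/- Let NF_n be the null-filiform Leibniz algebra with [e_i,e_1] = e_{i+1} for 1 ≤ i ≤ n−1. A linear map d : NF_n → NF_n is a derivation if and only if there exist scalars α_1,…,α_n such that d(e_i) = i·α_1·e_i + Σ_{j=i+1}^{n} α_{j−i+1} e_j for all 1 ≤ i ≤ n. -/
/-!
Writing `S` for the shift `e_i ↦ e_{i+1}` (with `S e_n = 0`), the bracket is
`[x, y] = y₁ • S x`. Taking `y = e_1` in the Leibniz rule gives `d S = S d + α₁ S` with
`α = d e_1`, and the rest of the rule says that the first coordinate of `d y` is `α₁ y₁`;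
conversely these two facts give back the Leibniz rule. Iterating the commutation relation,
`d S^k = S^k d + k α₁ S^k`, and applying it to `e_1` yields `d e_{k+1} = k α₁ e_{k+1} + S^k α`,
which is the stated formula.
-/

section ShiftBracket

variable {R V : Type*} [CommSemiring R] [AddCommMonoid V] [Module R V]
  (S d : Module.End R V) (a : V →ₗ[R] R)

theorem mul_eq_mul_add_smul_of_derivation
    (hd : ∀ x y, d (a y • S x) = a y • S (d x) + a (d y) • S x) (e : V) (he : a e = 1) :
    d * S = S * d + a (d e) • S := by
  ext x
  simpa [he] using hd x e

theorem mul_pow_eq_pow_mul_add_smul {c : R} (h : d * S = S * d + c • S) (k : ℕ) :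
    d * S ^ k = S ^ k * d + ((k : R) * c) • S ^ k := by
  induction k with
  | zero => simp
  | succ k ih =>
    calc d * S ^ (k + 1) = (S ^ k * d + ((k : R) * c) • S ^ k) * S := by
          rw [← ih, pow_succ, mul_assoc]
      _ = S ^ k * (S * d + c • S) + ((k : R) * c) • S ^ (k + 1) := by
        rw [← h, add_mul, mul_assoc, smul_mul_assoc, pow_succ]
      _ = S ^ (k + 1) * d + (((k + 1 : ℕ) : R) * c) • S ^ (k + 1) := by
        rw [mul_add, mul_smul_comm, ← mul_assoc, ← pow_succ]
        push_cast
        module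

theorem derivation_of_mul_eq_mul_add_smul {c : R} (hdS : d * S = S * d + c • S)
    (had : a ∘ₗ d = c • a) (x y : V) : d (a y • S x) = a y • S (d x) + a (d y) • S x := by
  have hx : d (S x) = S (d x) + c • S x := congr($hdS x)
  have hy : a (d y) = c * a y := congr($had y)
  rw [map_smul, hx, hy]
  module

end ShiftBracket

section Shift

variable {R : Type*} [CommSemiring R] {n : ℕ}

def finShift : Module.End R (Fin n → R) where
  toFun x i := if h : 1 ≤ (i : ℕ) then x ⟨i - 1, by omega⟩ else 0
  map_add' x y := by ext i; by_cases h : 1 ≤ (i : ℕ) <;> simp [h]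
  map_smul' c x := by ext i; by_cases h : 1 ≤ (i : ℕ) <;> simp [h]

theorem finShift_apply (x : Fin n → R) (i : Fin n) :
    finShift x i = if h : 1 ≤ (i : ℕ) then x ⟨i - 1, by omega⟩ else 0 := rfl

theorem finShift_pow_apply (k : ℕ) (x : Fin n → R) (i : Fin n) :
    (finShift ^ k) x i = if h : k ≤ (i : ℕ) then x ⟨i - k, by omega⟩ else 0 := by
  induction k generalizing i with
  | zero => simp
  | succ k ih =>
    rw [pow_succ', Module.End.mul_apply, finShift_apply]
    split_ifs with h1 h2 h2
    · rw [ih, dif_pos (by dsimp only; omega)]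
      congr 2
      dsimp only
      omega
    · rw [ih, dif_neg (by dsimp only; omega)]
    · omega
    · rfl

theorem finShift_pow_single_zero (h : 0 < n) (i : Fin n) (r : R) :
    (finShift ^ (i : ℕ)) (Pi.single ⟨0, h⟩ r) = Pi.single i r := by
  ext j
  rw [finShift_pow_apply]
  simp only [Pi.single_apply, Fin.ext_iff]
  split_ifs <;> first | rfl | omega

theorem finShift_pow_eq_zero {k : ℕ} (hk : n ≤ k) :
    (finShift ^ k : Module.End R (Fin n → R)) = 0 := by
  refine LinearMap.ext fun x => funext fun i => ?_
  rw [finShift_pow_apply, dif_neg (by omega)]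
  rfl

end Shift

section Formula

variable {R : Type*} [CommSemiring R] {n : ℕ}

theorem smul_single_add_finShift_pow_apply (h : 0 < n) (α : Fin n → R) (i j : Fin n) :
    (((i : R) * α ⟨0, h⟩) • Pi.single i 1 + (finShift ^ (i : ℕ)) α : Fin n → R) j =
      if j = i then ((i : ℕ) + 1 : R) * α ⟨0, h⟩
      else if (i : ℕ) < (j : ℕ) then
        α ⟨(j : ℕ) - (i : ℕ), Nat.lt_of_le_of_lt (Nat.sub_le _ _) j.isLt⟩
      else 0 := by
  rw [Pi.add_apply, Pi.smul_apply, finShift_pow_apply]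
  rcases lt_trichotomy (j : ℕ) i with hji | hji | hji
  · simp [Fin.ext_iff, hji.ne, hji.not_ge, hji.not_gt]
  · have : j = i := Fin.ext hji
    subst this
    simp [add_mul]
  · simp [Fin.ext_iff, hji.ne', hji.le, hji]

variable {d : Module.End R (Fin n → R)} {α : Fin n → R}

theorem mul_finShift_eq_of_apply_single (h : 0 < n)
    (hd : ∀ i : Fin n, d (Pi.single i 1) =
      ((i : R) * α ⟨0, h⟩) • Pi.single i 1 + (finShift ^ (i : ℕ)) α) :
    d * finShift = finShift * d + α ⟨0, h⟩ • finShift := by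
  have hpow (k : ℕ) : d ((finShift ^ k) (Pi.single ⟨0, h⟩ 1)) =
      ((k : R) * α ⟨0, h⟩) • (finShift ^ k) (Pi.single ⟨0, h⟩ 1) + (finShift ^ k) α := by
    rcases lt_or_ge k n with hk | hk
    · have he : (finShift ^ k) (Pi.single ⟨0, h⟩ 1) = Pi.single ⟨k, hk⟩ (1 : R) :=
        finShift_pow_single_zero h ⟨k, hk⟩ 1
      rw [he]
      exact hd ⟨k, hk⟩
    · simp [finShift_pow_eq_zero hk]
  refine LinearMap.pi_ext' fun i => LinearMap.ext_ring ?_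
  simp only [LinearMap.comp_apply, LinearMap.coe_single, LinearMap.add_apply,
    Module.End.mul_apply, LinearMap.smul_apply]
  have hsucc (k : ℕ) (x : Fin n → R) : finShift ((finShift ^ k) x) = (finShift ^ (k + 1)) x := by
    rw [pow_succ', Module.End.mul_apply]
  rw [← finShift_pow_single_zero h i, hsucc, hpow, hpow, map_add, map_smul, hsucc, hsucc]
  push_cast
  module

theorem proj_comp_eq_of_apply_single (h : 0 < n)
    (hd : ∀ i : Fin n, d (Pi.single i 1) =
      ((i : R) * α ⟨0, h⟩) • Pi.single i 1 + (finShift ^ (i : ℕ)) α) :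
    LinearMap.proj ⟨0, h⟩ ∘ₗ d = α ⟨0, h⟩ • LinearMap.proj ⟨0, h⟩ := by
  refine LinearMap.pi_ext' fun i => LinearMap.ext_ring ?_
  simp only [LinearMap.comp_apply, LinearMap.coe_single, LinearMap.smul_apply,
    LinearMap.proj_apply, hd]
  rcases i with ⟨_ | i, hi⟩ <;> simp [Fin.ext_iff, finShift_pow_apply]

end Formula

theorem NFbr_eq_smul_finShift {n : ℕ} (h : 0 < n) (x y : Fin n → ℂ) :
    NFbr n x y = y ⟨0, h⟩ • finShift x := by
  ext i
  by_cases hi : 1 ≤ (i : ℕ) <;> simp [NFbr, finShift_apply, hi]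

/-- a linear map `d` on `NF_n` is a derivation iff there are
scalars `α_1, …, α_n` (here `α 0, …, α (n-1)`) with
`d(e_i) = i·α_1·e_i + ∑_{j=i+1}^n α_{j-i+1} e_j`. -/
theorem NF_derivation_characterization (n : ℕ) (hn : 1 ≤ n)
    (d : (Fin n → ℂ) →ₗ[ℂ] (Fin n → ℂ)) :
    (∀ x y : Fin n → ℂ, d (NFbr n x y) = NFbr n (d x) y + NFbr n x (d y)) ↔
    (∃ α : Fin n → ℂ, ∀ i j : Fin n,
      d (Pi.single i 1) j =
        if j = i then ((i : ℕ) + 1 : ℂ) * α ⟨0, hn⟩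
        else if (i : ℕ) < (j : ℕ) then
          α ⟨(j : ℕ) - (i : ℕ), Nat.lt_of_le_of_lt (Nat.sub_le _ _) j.isLt⟩
        else 0) := by
  simp_rw [NFbr_eq_smul_finShift hn, ← smul_single_add_finShift_pow_apply hn]
  constructor
  · intro hd
    have hdS := mul_eq_mul_add_smul_of_derivation finShift d
      (LinearMap.proj (⟨0, hn⟩ : Fin n)) hd (Pi.single ⟨0, hn⟩ 1) (by simp)
    refine ⟨d (Pi.single ⟨0, hn⟩ 1), fun i => congrFun ?_⟩
    have := congr($(mul_pow_eq_pow_mul_add_smul _ _ hdS i) (Pi.single ⟨0, hn⟩ 1))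
    simpa [finShift_pow_single_zero, add_comm] using this
  · rintro ⟨α, hα⟩
    exact derivation_of_mul_eq_mul_add_smul finShift d (LinearMap.proj (⟨0, hn⟩ : Fin n))
      (mul_finShift_eq_of_apply_single hn (funext <| hα ·))
      (proj_comp_eq_of_apply_single hn (funext <| hα ·))
end

section
/- Let NF_n (n ≥ 2) be the null-filiform Leibniz algebra with [e_i,e_1] = e_{i+1}. If (d,D) is a biderivation of NF_n, writing d(e_1) = Σ α_j e_j and D(e_1) = Σ β_j e_j, then β_1 = α_1. Conversely, any pair (d,D) where d is a derivation determined by parameters α_1,…,α_n, D(e_1) = α_1 e_1 + Σ_{j=2}^n β_j e_j, and D(e_i) = 0 for i ≥ 2, is a biderivation of NF_n. -/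
def NFIsDer (n : ℕ) (d : (Fin n → ℂ) →ₗ[ℂ] (Fin n → ℂ)) : Prop :=
  ∀ x y, d (NFbr n x y) = NFbr n (d x) y + NFbr n x (d y)

def NFIsAntiDer (n : ℕ) (D : (Fin n → ℂ) →ₗ[ℂ] (Fin n → ℂ)) : Prop :=
  ∀ x y, D (NFbr n x y) = NFbr n (D x) y - NFbr n (D y) x

def NFCompat (n : ℕ) (d D : (Fin n → ℂ) →ₗ[ℂ] (Fin n → ℂ)) : Prop :=
  ∀ x y, NFbr n x (d y) = NFbr n x (D y)

/-!
In `NF_n` the bracket is `[x, y] = y₁ • S x`, where `S = NFshift n = [·, e_1]` is the shift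
`e_i ↦ e_{i+1}`. Hence `(d, D)` is compatible exactly when `d y` and `D y` have the same first coordinate, which at
`y = e_1` gives `β₁ = α₁`. Conversely, `D y = y₁ • D e_1` and `S` vanishes in the first coordinate,
so both sides of the anti-derivation identity vanish; and `d`, which scales first coordinates by
`α₁`, is a derivation because `[d, S] = α₁ S`, which is checked on the basis.
-/

theorem LinearMap.apply_eq_smul_of_single_eq_zero {R M ι : Type*} [CommSemiring R]
    [AddCommMonoid M] [Module R M] [Fintype ι] [DecidableEq ι] (f : (ι → R) →ₗ[R] M) (i₀ : ι)
    (hf : ∀ i, i ≠ i₀ → f (Pi.single i 1) = 0) (y : ι → R) :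
    f y = y i₀ • f (Pi.single i₀ 1) := by
  suffices f = (LinearMap.proj i₀).smulRight (f (Pi.single i₀ 1)) by
    conv_lhs => rw [this]
    rw [LinearMap.smulRight_apply, LinearMap.proj_apply]
  refine (Pi.basisFun R ι).ext fun i => ?_
  rcases eq_or_ne i i₀ with rfl | hi
  · simp
  · simp [hf i hi, hi]

section NF

variable {n : ℕ}

def NFshift (n : ℕ) : (Fin n → ℂ) →ₗ[ℂ] (Fin n → ℂ) where
  toFun x i := if h : 1 ≤ (i : ℕ) then x ⟨i - 1, by omega⟩ else 0
  map_add' x y := by ext i; split_ifs <;> simp [*]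
  map_smul' c x := by ext i; split_ifs <;> simp [*]

theorem NFshift_apply (x : Fin n → ℂ) (i : Fin n) :
    NFshift n x i = if h : 1 ≤ (i : ℕ) then x ⟨i - 1, by omega⟩ else 0 := rfl

theorem NFshift_apply_zero [NeZero n] (x : Fin n → ℂ) : NFshift n x 0 = 0 := by
  simp [NFshift_apply]

theorem NFshift_single (i : Fin n) :
    NFshift n (Pi.single i 1) = if h : (i : ℕ) + 1 < n then Pi.single ⟨i + 1, h⟩ 1 else 0 := by
  ext j
  by_cases h : (i : ℕ) + 1 < n
  all_goals
    simp only [h, dite_true, dite_false, NFshift_apply, Pi.single_apply, Fin.ext_iff, Pi.zero_apply]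
    split_ifs <;> first | rfl | omega

theorem comp_NFshift [NeZero n] (d : (Fin n → ℂ) →ₗ[ℂ] (Fin n → ℂ)) (α : Fin n → ℂ)
    (hd : ∀ i j : Fin n, d (Pi.single i 1) j =
      if j = i then ((i : ℕ) + 1 : ℂ) * α 0
      else if (i : ℕ) < (j : ℕ) then α ⟨(j : ℕ) - (i : ℕ), by omega⟩ else 0) :
    d ∘ₗ NFshift n = NFshift n ∘ₗ d + α 0 • NFshift n := by
  refine (Pi.basisFun ℂ (Fin n)).ext fun i => funext fun j => ?_
  simp only [Pi.basisFun_apply, LinearMap.comp_apply, LinearMap.add_apply, LinearMap.smul_apply,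
    Pi.add_apply, Pi.smul_apply, smul_eq_mul, NFshift_single, NFshift_apply (d _), hd]
  by_cases h : (i : ℕ) + 1 < n
  all_goals
    simp only [h, dite_true, dite_false, hd, Pi.single_apply, Fin.ext_iff, map_zero, Pi.zero_apply]
    split_ifs <;> first
      | omega
      | (rw [mul_zero, add_zero]; congr 1; ext; dsimp only; omega)
      | (push_cast; ring)

theorem NFbr_eq_smul_NFshift [NeZero n] (x y : Fin n → ℂ) : NFbr n x y = y 0 • NFshift n x := by
  ext i
  simp only [NFbr, NFshift_apply, Pi.smul_apply, smul_eq_mul, mul_dite, mul_zero]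
  rfl

theorem NFCompat_iff [NeZero n] (hn : 1 < n) {d D : (Fin n → ℂ) →ₗ[ℂ] (Fin n → ℂ)} :
    NFCompat n d D ↔ ∀ y, d y 0 = D y 0 := by
  simp only [NFCompat, NFbr_eq_smul_NFshift]
  refine ⟨fun h y => ?_, fun h x y => by rw [h]⟩
  simpa [NFshift_apply] using congrFun (h (Pi.single 0 1) y) ⟨1, hn⟩

theorem NFIsDer_of_comp_NFshift [NeZero n] (d : (Fin n → ℂ) →ₗ[ℂ] (Fin n → ℂ)) (c : ℂ)
    (hd : ∀ y, d y 0 = c * y 0) (hcomm : d ∘ₗ NFshift n = NFshift n ∘ₗ d + c • NFshift n) :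
    NFIsDer n d := by
  intro x y
  simp only [NFbr_eq_smul_NFshift, map_smul, hd, ← LinearMap.comp_apply, hcomm]
  simp only [LinearMap.add_apply, LinearMap.comp_apply, LinearMap.smul_apply]
  module

theorem NFIsAntiDer_of_eq_smul [NeZero n] (D : (Fin n → ℂ) →ₗ[ℂ] (Fin n → ℂ))
    (hD : ∀ y, D y = y 0 • D (Pi.single 0 1)) : NFIsAntiDer n D := by
  intro x y
  rw [NFbr_eq_smul_NFshift x y, hD, Pi.smul_apply, NFshift_apply_zero, NFbr_eq_smul_NFshift,
    NFbr_eq_smul_NFshift, hD x, hD y, map_smul, map_smul]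
  module

end NF

/-- for a biderivation `(d,D)` of `NF_n` one has `β₁ = α₁`
(the `e_1`-coefficients of `D(e_1)` and `d(e_1)` agree); conversely, any pair
`(d, D)` with `d` a derivation given by parameters `α`, `D(e_1) = α₁ e_1 + ∑_{j≥2} β_j e_j`
and `D(e_i) = 0` for `i ≥ 2` is a biderivation. -/
theorem NF_biderivation_characterization (n : ℕ) (hn : 2 ≤ n) :
    (∀ d D : (Fin n → ℂ) →ₗ[ℂ] (Fin n → ℂ),
      NFIsDer n d → NFIsAntiDer n D → NFCompat n d D →
      D (Pi.single ⟨0, by omega⟩ 1) ⟨0, by omega⟩ =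
        d (Pi.single ⟨0, by omega⟩ 1) ⟨0, by omega⟩) ∧
    (∀ (d D : (Fin n → ℂ) →ₗ[ℂ] (Fin n → ℂ)) (α β : Fin n → ℂ),
      (∀ i j : Fin n, d (Pi.single i 1) j =
        if j = i then ((i : ℕ) + 1 : ℂ) * α ⟨0, by omega⟩
        else if (i : ℕ) < (j : ℕ) then
          α ⟨(j : ℕ) - (i : ℕ), Nat.lt_of_le_of_lt (Nat.sub_le _ _) j.isLt⟩
        else 0) →
      (∀ j : Fin n, D (Pi.single ⟨0, by omega⟩ 1) j =
        if (j : ℕ) = 0 then α ⟨0, by omega⟩ else β j) →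
      (∀ i : Fin n, 1 ≤ (i : ℕ) → D (Pi.single i 1) = 0) →
      NFIsDer n d ∧ NFIsAntiDer n D ∧ NFCompat n d D) := by
  have : NeZero n := ⟨by omega⟩
  have h0 : (⟨0, by omega⟩ : Fin n) = 0 := rfl
  simp only [h0]
  refine ⟨fun d D _ _ hc => ((NFCompat_iff hn).1 hc _).symm, fun d D α β hd hD₁ hD => ?_⟩
  have hD_eq : ∀ y, D y = y 0 • D (Pi.single 0 1) :=
    D.apply_eq_smul_of_single_eq_zero 0 fun i hi => hD i (Fin.pos_iff_ne_zero.2 hi)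
  have hd_zero : ∀ y, d y 0 = α 0 * y 0 := fun y => by
    simpa [hd, mul_comm] using
      (LinearMap.proj 0 ∘ₗ d).apply_eq_smul_of_single_eq_zero 0 (fun i hi => by simp [hd, hi.symm]) y
  refine ⟨NFIsDer_of_comp_NFshift d (α 0) hd_zero (comp_NFshift d α hd),
    NFIsAntiDer_of_eq_smul D hD_eq, (NFCompat_iff hn).2 fun y => ?_⟩
  simp [hd_zero, hD_eq y, hD₁, mul_comm]
end

section
/- Let F_n^1 (n ≥ 3) be the filiform Leibniz algebra with [e_1,e_1] = e_3 and [e_i,e_1] = e_{i+1} for 2 ≤ i ≤ n−1. A linear map D : F_n^1 → F_n^1 is an anti-derivation if and only if there exist scalars β_1,…,β_{n+2} such that D(e_1) = Σ_{j=1}^n β_j e_j, D(e_2) = β_{n+1}e_1 − β_{n+1}e_2 + β_{n+2}e_n, and D(e_i) = 0 for 3 ≤ i ≤ n. -/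
/-- The bracket of the filiform Leibniz algebra `F_n^1`:
`[e_1,e_1] = e_3`, `[e_i,e_1] = e_{i+1}` for `2 ≤ i ≤ n−1`
(here `e_i` is `Pi.single (i-1) 1`). -/
def F1br (n : ℕ) (x y : Fin n → ℂ) : Fin n → ℂ := fun i =>
  if h2 : (i : ℕ) = 2 then
    y ⟨0, by have := i.isLt; omega⟩ *
      (x ⟨0, by have := i.isLt; omega⟩ + x ⟨1, by have := i.isLt; omega⟩)
  else if h3 : 3 ≤ (i : ℕ) then
    y ⟨0, by have := i.isLt; omega⟩ * x ⟨(i : ℕ) - 1, by have := i.isLt; omega⟩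
  else 0

lemma F1br_apply (n : ℕ) (hn : 2 < n) (x y : Fin n → ℂ) (i : Fin n) :
    F1br n x y i =
      if (i : ℕ) = 2 then y ⟨0, by omega⟩ * (x ⟨0, by omega⟩ + x ⟨1, by omega⟩)
      else if 3 ≤ (i : ℕ) then
        y ⟨0, by omega⟩ * x ⟨(i : ℕ) - 1, by have := i.isLt; omega⟩
      else 0 := by
  unfold F1br
  split_ifs <;> rfl

lemma F1br_y0 (n : ℕ) (hn : 2 < n) (x y : Fin n → ℂ) (hy : y ⟨0, by omega⟩ = 0) :
    F1br n x y = 0 := by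
  funext i
  rw [F1br_apply n hn]
  split_ifs <;> simp [hy]

lemma F1br_x0 (n : ℕ) (hn : 2 < n) (y : Fin n → ℂ) :
    F1br n 0 y = 0 := by
  funext i
  rw [F1br_apply n hn]
  split_ifs <;> simp

lemma F1br_single (n : ℕ) (hn : 2 < n) (k : ℕ) (hk1 : 1 ≤ k) (hk2 : k ≤ n - 2) :
    F1br n (Pi.single (⟨k, by omega⟩ : Fin n) 1) (Pi.single (⟨0, by omega⟩ : Fin n) 1)
      = Pi.single (⟨k + 1, by omega⟩ : Fin n) 1 := by
  funext i
  rw [F1br_apply n hn]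
  rcases i with ⟨iv, hi⟩
  simp only [Pi.single_apply, Fin.mk.injEq]
  split_ifs <;> simp_all <;> omega

lemma F1br_e1e1 (n : ℕ) (hn : 2 < n) :
    F1br n (Pi.single (⟨0, by omega⟩ : Fin n) 1) (Pi.single (⟨0, by omega⟩ : Fin n) 1)
      = Pi.single (⟨2, by omega⟩ : Fin n) 1 := by
  funext i
  rw [F1br_apply n hn]
  rcases i with ⟨iv, hi⟩
  simp only [Pi.single_apply, Fin.mk.injEq]
  split_ifs <;> simp_all <;> omega

lemma Dsum {n : ℕ} (D : (Fin n → ℂ) →ₗ[ℂ] (Fin n → ℂ)) (z : Fin n → ℂ) (j : Fin n) :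
    D z j = ∑ k, z k * D (Pi.single k 1) j := by
  have h := LinearMap.pi_apply_eq_sum_univ D z
  have h2 : ∀ k : Fin n, (fun j => if k = j then (1:ℂ) else 0) = Pi.single k 1 := by
    intro k; funext j; simp [Pi.single_apply, eq_comm]
  rw [h]
  simp only [h2, Finset.sum_apply, Pi.smul_apply, smul_eq_mul]

theorem F1_ad_fwd (n : ℕ) (hn : 2 < n)
    (D : (Fin n → ℂ) →ₗ[ℂ] (Fin n → ℂ))
    (H : ∀ x y : Fin n → ℂ, D (F1br n x y) = F1br n (D x) y - F1br n (D y) x) :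
    (∃ β : Fin (n + 2) → ℂ,
      (∀ j : Fin n, D (Pi.single ⟨0, by omega⟩ 1) j = β ⟨(j : ℕ), Nat.lt_add_right 2 j.isLt⟩) ∧
      (∀ j : Fin n, D (Pi.single ⟨1, by omega⟩ 1) j =
        if (j : ℕ) = 0 then β ⟨n, Nat.lt_succ_of_lt (Nat.lt_succ_self n)⟩
        else if (j : ℕ) = 1 then -β ⟨n, Nat.lt_succ_of_lt (Nat.lt_succ_self n)⟩
        else if (j : ℕ) = n - 1 then β ⟨n + 1, Nat.lt_succ_self (n + 1)⟩
        else 0) ∧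
      (∀ i : Fin n, 2 ≤ (i : ℕ) → D (Pi.single i 1) = 0)) := by
  have h0 : (0:ℕ) < n := by omega
  have h1 : (1:ℕ) < n := by omega
  have h2n : (2:ℕ) < n := by omega
  have hD2 : D (Pi.single (⟨2, h2n⟩ : Fin n) 1) = 0 := by
    rw [← F1br_e1e1 n hn, H, sub_self]
  have hstep : ∀ k : ℕ, ∀ _hk1 : 1 ≤ k, ∀ _hk2 : k ≤ n - 2,
      D (Pi.single (⟨k + 1, by omega⟩ : Fin n) 1)
        = F1br n (D (Pi.single (⟨k, by omega⟩ : Fin n) 1)) (Pi.single (⟨0, h0⟩ : Fin n) 1) := by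
    intro k hk1 hk2
    have hy : (Pi.single (⟨k, by omega⟩ : Fin n) (1:ℂ) : Fin n → ℂ) ⟨0, h0⟩ = 0 := by
      rw [Pi.single_apply, if_neg]
      simp only [Fin.mk.injEq]
      omega
    rw [← F1br_single n hn k hk1 hk2, H, F1br_y0 n hn _ _ hy, sub_zero]
  have hz : ∀ k : ℕ, ∀ _hk2 : 2 ≤ k, ∀ hk : k < n, D (Pi.single (⟨k, hk⟩ : Fin n) 1) = 0 := by
    intro k hk2
    induction k, hk2 using Nat.le_induction with
    | base => intro hk; exact hD2
    | succ k hk ih =>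
      intro hkn
      rw [hstep k (by omega) (by omega), ih (by omega), F1br_x0 n hn]
  have hγ : F1br n (D (Pi.single (⟨1, h1⟩ : Fin n) 1)) (Pi.single (⟨0, h0⟩ : Fin n) 1) = 0 := by
    rw [← hstep 1 le_rfl (by omega)]
    exact hD2
  have hγ2 : D (Pi.single (⟨1, h1⟩ : Fin n) 1) ⟨0, h0⟩
      + D (Pi.single (⟨1, h1⟩ : Fin n) 1) ⟨1, h1⟩ = 0 := by
    have := congrFun hγ ⟨2, h2n⟩
    rw [F1br_apply n hn] at this
    simpa [Pi.single_apply, Fin.ext_iff] using this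
  have hγ3 : ∀ j : ℕ, 2 ≤ j → j ≤ n - 2 → ∀ hj : j < n,
      D (Pi.single (⟨1, h1⟩ : Fin n) 1) ⟨j, hj⟩ = 0 := by
    intro j hj1 hj2 hj
    have := congrFun hγ ⟨j + 1, by omega⟩
    rw [F1br_apply n hn] at this
    simp only [Pi.single_apply, Fin.ext_iff] at this
    simp only [Pi.zero_apply] at this
    split_ifs at this with ha hb
    · omega
    · simpa using this
    · omega
  refine ⟨fun j => if h : (j : ℕ) < n then D (Pi.single (⟨0, h0⟩ : Fin n) 1) ⟨j, h⟩
      else if (j : ℕ) = n then D (Pi.single (⟨1, h1⟩ : Fin n) 1) ⟨0, h0⟩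
      else D (Pi.single (⟨1, h1⟩ : Fin n) 1) ⟨n - 1, by omega⟩, ?_, ?_, ?_⟩
  · intro j
    simp
  · intro j
    rcases j with ⟨jv, hj⟩
    by_cases hj0 : jv = 0
    · subst hj0; simp
    · by_cases hj1 : jv = 1
      · subst hj1
        simp only [dif_neg (by omega : ¬ n < n), if_pos rfl]
        simp only [if_neg (by omega : ¬ (1:ℕ) = 0), if_pos rfl]
        show D (Pi.single (⟨1, h1⟩ : Fin n) 1) ⟨1, h1⟩
          = -(D (Pi.single (⟨1, h1⟩ : Fin n) 1) ⟨0, h0⟩)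
        linear_combination hγ2
      · by_cases hjn : jv = n - 1
        · subst hjn
          simp only [if_neg (by omega : ¬ (n-1:ℕ) = 0), if_neg (by omega : ¬ (n-1:ℕ) = 1),
            if_pos rfl, dif_neg (by omega : ¬ n + 1 < n), if_neg (by omega : ¬ n + 1 = n),
            if_true]
        · simp only [if_neg hj0, if_neg hj1, if_neg hjn]
          exact hγ3 jv (by omega) (by omega) hj
  · intro i hi
    have : i = (⟨(i:ℕ), i.isLt⟩ : Fin n) := by simp
    rw [this]
    exact hz (i:ℕ) hi i.isLt

theorem F1_ad_bwd (n : ℕ) (hn : 2 < n)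
    (D : (Fin n → ℂ) →ₗ[ℂ] (Fin n → ℂ))
    (hβex : ∃ β : Fin (n + 2) → ℂ,
      (∀ j : Fin n, D (Pi.single ⟨0, by omega⟩ 1) j = β ⟨(j : ℕ), Nat.lt_add_right 2 j.isLt⟩) ∧
      (∀ j : Fin n, D (Pi.single ⟨1, by omega⟩ 1) j =
        if (j : ℕ) = 0 then β ⟨n, Nat.lt_succ_of_lt (Nat.lt_succ_self n)⟩
        else if (j : ℕ) = 1 then -β ⟨n, Nat.lt_succ_of_lt (Nat.lt_succ_self n)⟩
        else if (j : ℕ) = n - 1 then β ⟨n + 1, Nat.lt_succ_self (n + 1)⟩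
        else 0) ∧
      (∀ i : Fin n, 2 ≤ (i : ℕ) → D (Pi.single i 1) = 0)) :
    ∀ x y : Fin n → ℂ, D (F1br n x y) = F1br n (D x) y - F1br n (D y) x := by
  obtain ⟨β, hβ1, hβ2, hβ3⟩ := hβex
  have h0 : (0:ℕ) < n := by omega
  have h1 : (1:ℕ) < n := by omega
  have hsum01 : ∀ z : Fin n → ℂ, D z ⟨0, h0⟩ + D z ⟨1, h1⟩
      = z ⟨0, h0⟩ * (β ⟨0, by omega⟩ + β ⟨1, by omega⟩) := by
    intro z
    rw [Dsum, Dsum, ← Finset.sum_add_distrib]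
    rw [Finset.sum_eq_single (⟨0, h0⟩ : Fin n)]
    · rw [hβ1 ⟨0, h0⟩, hβ1 ⟨1, h1⟩]
      ring
    · intro k _ hkne
      by_cases hk2 : 2 ≤ (k : ℕ)
      · rw [hβ3 k hk2]; simp
      · have hk1 : k = ⟨1, h1⟩ := by
          apply Fin.ext
          have : (k : ℕ) ≠ 0 := fun h => hkne (Fin.ext h)
          simpa using by omega
        rw [hk1, hβ2 ⟨0, h0⟩, hβ2 ⟨1, h1⟩]
        norm_num
    · intro h; exact absurd (Finset.mem_univ _) h
  have hval : ∀ z : Fin n → ℂ, ∀ j : Fin n, 2 ≤ (j : ℕ) → (j : ℕ) ≤ n - 2 →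
      D z j = z ⟨0, h0⟩ * β ⟨(j : ℕ), Nat.lt_add_right 2 j.isLt⟩ := by
    intro z j hj1 hj2
    rw [Dsum]
    rw [Finset.sum_eq_single (⟨0, h0⟩ : Fin n)]
    · rw [hβ1 j]
    · intro k _ hkne
      by_cases hk2 : 2 ≤ (k : ℕ)
      · rw [hβ3 k hk2]; simp
      · have hk1 : k = ⟨1, h1⟩ := by
          apply Fin.ext
          have : (k : ℕ) ≠ 0 := fun h => hkne (Fin.ext h)
          simpa using by omega
        rw [hk1, hβ2 j, if_neg (by omega), if_neg (by omega), if_neg (by omega), mul_zero]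
    · intro h; exact absurd (Finset.mem_univ _) h
  intro x y
  funext i
  have hL : D (F1br n x y) i = 0 := by
    rw [Dsum]
    apply Finset.sum_eq_zero
    intro k _
    by_cases hk : 2 ≤ (k : ℕ)
    · rw [hβ3 k hk]; simp
    · have : F1br n x y k = 0 := by
        rw [F1br_apply n hn, if_neg (by omega), if_neg (by omega)]
      rw [this, zero_mul]
  rw [Pi.sub_apply, hL, F1br_apply n hn, F1br_apply n hn]
  split_ifs with hi2 hi3
  · rw [hsum01 x, hsum01 y]; ring
  · have hi := i.isLt
    rw [hval x ⟨(i:ℕ) - 1, by omega⟩ (by simp; omega) (by simp; omega),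
        hval y ⟨(i:ℕ) - 1, by omega⟩ (by simp; omega) (by simp; omega)]
    ring
  · ring

/-- characterization of the anti-derivations of `F_n^1`. -/
theorem F1_antiderivation_characterization (n : ℕ) (hn : 3 ≤ n)
    (D : (Fin n → ℂ) →ₗ[ℂ] (Fin n → ℂ)) :
    (∀ x y : Fin n → ℂ, D (F1br n x y) = F1br n (D x) y - F1br n (D y) x) ↔
    (∃ β : Fin (n + 2) → ℂ,
      (∀ j : Fin n, D (Pi.single ⟨0, by omega⟩ 1) j = β ⟨(j : ℕ), by have := j.isLt; omega⟩) ∧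
      (∀ j : Fin n, D (Pi.single ⟨1, by omega⟩ 1) j =
        if (j : ℕ) = 0 then β ⟨n, by omega⟩
        else if (j : ℕ) = 1 then -β ⟨n, by omega⟩
        else if (j : ℕ) = n - 1 then β ⟨n + 1, by omega⟩
        else 0) ∧
      (∀ i : Fin n, 2 ≤ (i : ℕ) → D (Pi.single i 1) = 0)) :=
  ⟨F1_ad_fwd n hn D, F1_ad_bwd n hn D⟩
end

section
/- Let R(F_n^1) be the (n+2)-dimensional solvable Leibniz algebra with basis e_1,…,e_n,h_1,h_2 and nonzero products [e_i,e_1]=e_{i+1} (2 ≤ i ≤ n−1), [e_1,h_2]=e_1, [h_2,e_1]=−e_1, [e_i,h_1]=e_i (2 ≤ i ≤ n), [e_i,h_2]=(i−1)e_i (2 ≤ i ≤ n). Then every anti-derivation D of R(F_n^1) satisfies D(e_i) = 0 for all 3 ≤ i ≤ n. -/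
/-!
In `R(F_n^1)` right multiplication by any `e_j` with `j ≥ 2` is zero. For such a right
annihilator `b`, applying an anti-derivation `D` to `[a, b] = 0` gives `[D b, a] = 0`, and
then `D [b, a] = [D b, a] - [D a, b] = 0`. Taking `b = e_{i-1}` and `a = e_1` yields
`D e_i = 0` for `3 ≤ i ≤ n`.
-/

/-- The bracket of the `(n+2)`-dimensional solvable Leibniz algebra `R(F_n^1)`:
basis `e_1, …, e_n` (indices `0, …, n-1`), `h_1` (index `n`), `h_2` (index
`n+1`), with `[e_i,e_1] = e_{i+1}` (`2 ≤ i ≤ n−1`), `[e_1,h_2] = e_1`,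
`[h_2,e_1] = −e_1`, `[e_i,h_1] = e_i` (`2 ≤ i ≤ n`),
`[e_i,h_2] = (i−1)e_i` (`2 ≤ i ≤ n`). -/
def RF1br (n : ℕ) (x y : Fin (n + 2) → ℂ) : Fin (n + 2) → ℂ := fun j =>
  if h0 : (j : ℕ) = 0 then
    x ⟨0, by omega⟩ * y ⟨n + 1, by omega⟩ - x ⟨n + 1, by omega⟩ * y ⟨0, by omega⟩
  else if hj : (j : ℕ) < n then
    (if 2 ≤ (j : ℕ) then x ⟨(j : ℕ) - 1, by omega⟩ * y ⟨0, by omega⟩ else 0)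
      + x j * y ⟨n, by omega⟩ + ((j : ℕ) : ℂ) * x j * y ⟨n + 1, by omega⟩
  else 0

section AntiDerivation

variable {M : Type*} [AddGroup M]

def IsAntiDerivation (br : M → M → M) (D : M → M) : Prop :=
  ∀ x y, D (br x y) = br (D x) y - br (D y) x

theorem IsAntiDerivation.apply_eq_zero_of_right_annihilator {F : Type*} [FunLike F M M]
    [ZeroHomClass F M M] {br : M → M → M} {D : F}
    (hD : IsAntiDerivation br D) {b : M} (hb : ∀ x, br x b = 0) (a : M) :
    D (br b a) = 0 := by
  have hDba : br (D b) a = 0 := by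
    simpa [hb] using (hD a b).symm
  rw [hD b a, hDba, hb, sub_zero]

end AntiDerivation

theorem RF1br_single_right_eq_zero (n : ℕ) (x : Fin (n + 2) → ℂ) (m : ℕ)
    (hm₁ : 1 ≤ m) (hmn : m < n) :
    RF1br n x (Pi.single (⟨m, by omega⟩ : Fin (n + 2)) 1) = 0 := by
  funext j
  simp only [RF1br, Pi.zero_apply, Pi.single_apply, Fin.ext_iff]
  split_ifs <;> first | rfl | (exfalso; omega) | ring

theorem RF1br_single_pred_single_zero (n : ℕ) (i : Fin (n + 2)) (hi : 2 ≤ (i : ℕ))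
    (hin : (i : ℕ) < n) :
    RF1br n (Pi.single (⟨(i : ℕ) - 1, by omega⟩ : Fin (n + 2)) 1)
      (Pi.single (⟨0, by omega⟩ : Fin (n + 2)) 1) = Pi.single i 1 := by
  funext j
  simp only [RF1br, Pi.single_apply, Fin.ext_iff]
  split_ifs <;> first | rfl | (exfalso; omega) | simp_all

theorem RF1_antiderivation_kills_high_basis_general (n : ℕ)
    (D : (Fin (n + 2) → ℂ) →ₗ[ℂ] (Fin (n + 2) → ℂ))
    (hD : ∀ x y, D (RF1br n x y) = RF1br n (D x) y - RF1br n (D y) x) :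
    ∀ i : Fin (n + 2), 2 ≤ (i : ℕ) → (i : ℕ) < n → D (Pi.single i 1) = 0 := by
  intro i hi hin
  have hb := fun x => RF1br_single_right_eq_zero n x ((i : ℕ) - 1) (by omega) (by omega)
  rw [← RF1br_single_pred_single_zero n i hi hin]
  exact IsAntiDerivation.apply_eq_zero_of_right_annihilator (br := RF1br n) (D := D) hD hb _

/-- every anti-derivation of `R(F_n^1)` kills `e_3, …, e_n`. -/
theorem RF1_antiderivation_kills_high_basis (n : ℕ) (hn : 3 ≤ n)
    (D : (Fin (n + 2) → ℂ) →ₗ[ℂ] (Fin (n + 2) → ℂ))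
    (hD : ∀ x y, D (RF1br n x y) = RF1br n (D x) y - RF1br n (D y) x) :
    ∀ i : Fin (n + 2), 2 ≤ (i : ℕ) → (i : ℕ) < n → D (Pi.single i 1) = 0 :=
  RF1_antiderivation_kills_high_basis_general n D hD
end
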